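/- arXiv:math/0503342 — 5 statements merged into one kernel-verified Lean document; each statement's English description precedes it below -/
import Mathlib

section
/- Let k be a field of characteristic zero, let Ω be a k-vector space of finite dimension n ≥ 2, let ⋆ ∈ Ω, and let Λ be a subspace of (Ω⊗Ω) ⊕ (Ω⊗Ω). There exists a unit action (α, β) for ⋆ with α ≠ β that is coherent with Λ if and only if there exists a basis (∘₁, …, ∘ₙ) of Ω with ⋆ = ∘₁ + ⋯ + ∘ₙ such that Λ is contained in the span of the following elements of (Ω⊗Ω) ⊕ (Ω⊗Ω): (⋆⊗∘₂, ∘₂⊗∘₂); (∘₁⊗∘₁, ∘₁⊗⋆); (∘ᵢ⊗∘₁, ∘ᵢ⊗∘₁) for 2 ≤ i ≤ n; (∘₂⊗∘ⱼ, ∘₂⊗∘ⱼ) for 3 ≤ j ≤ n; (∘₁⊗∘ᵢ, ∘ᵢ⊗∘₂) for 3 ≤ i ≤ n; and (∘ᵢ⊗∘ⱼ, 0) and (0, ∘ᵢ⊗∘ⱼ) for 3 ≤ i, j ≤ n. -/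
open TensorProduct

section Defs

variable {k : Type*} [Field k]

noncomputable def contrL {Ω : Type*} [AddCommGroup Ω] [Module k Ω]
    (φ : Module.Dual k Ω) : Ω ⊗[k] Ω →ₗ[k] Ω :=
  (TensorProduct.lid k Ω).toLinearMap ∘ₗ TensorProduct.map φ LinearMap.id

noncomputable def contrR {Ω : Type*} [AddCommGroup Ω] [Module k Ω]
    (φ : Module.Dual k Ω) : Ω ⊗[k] Ω →ₗ[k] Ω :=
  (TensorProduct.rid k Ω).toLinearMap ∘ₗ TensorProduct.map LinearMap.id φ

noncomputable def contrB {Ω₁ Ω₂ : Type*} [AddCommGroup Ω₁] [Module k Ω₁]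
    [AddCommGroup Ω₂] [Module k Ω₂]
    (φ : Module.Dual k Ω₁) (ψ : Module.Dual k Ω₂) : Ω₁ ⊗[k] Ω₂ →ₗ[k] k :=
  (TensorProduct.lid k k).toLinearMap ∘ₗ TensorProduct.map φ ψ

/-- The coherence equations (C1)-(C5) for a pair `uv ∈ (Ω⊗Ω) × (Ω⊗Ω)`. -/
def CoherenceEqs {Ω : Type*} [AddCommGroup Ω] [Module k Ω]
    (α β : Module.Dual k Ω) (star : Ω)
    (uv : (Ω ⊗[k] Ω) × (Ω ⊗[k] Ω)) : Prop :=
  contrL β uv.1 = contrL β uv.2 ∧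
  contrL α uv.1 = contrR β uv.2 ∧
  contrR α uv.1 = contrR α uv.2 ∧
  contrR β uv.1 = contrB β β uv.2 • star ∧
  contrB α α uv.1 • star = contrL α uv.2

/-- The compatibility equations (C1)-(C3). -/
def CompatEqs {Ω : Type*} [AddCommGroup Ω] [Module k Ω]
    (α β : Module.Dual k Ω)
    (uv : (Ω ⊗[k] Ω) × (Ω ⊗[k] Ω)) : Prop :=
  contrL β uv.1 = contrL β uv.2 ∧
  contrL α uv.1 = contrR β uv.2 ∧
  contrR α uv.1 = contrR α uv.2

def IsCoherent {Ω : Type*} [AddCommGroup Ω] [Module k Ω]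
    (α β : Module.Dual k Ω) (star : Ω)
    (Λ : Submodule k ((Ω ⊗[k] Ω) × (Ω ⊗[k] Ω))) : Prop :=
  ∀ uv ∈ Λ, CoherenceEqs α β star uv

def IsCompatible {Ω : Type*} [AddCommGroup Ω] [Module k Ω]
    (α β : Module.Dual k Ω)
    (Λ : Submodule k ((Ω ⊗[k] Ω) × (Ω ⊗[k] Ω))) : Prop :=
  ∀ uv ∈ Λ, CompatEqs α β uv

end Defs


section Aux
variable {k : Type*} [Field k]
variable {Ω : Type*} [AddCommGroup Ω] [Module k Ω]

@[simp] lemma contrL_tmul (φ : Module.Dual k Ω) (x y : Ω) :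
    contrL φ (x ⊗ₜ[k] y) = φ x • y := by simp [contrL]
@[simp] lemma contrR_tmul (φ : Module.Dual k Ω) (x y : Ω) :
    contrR φ (x ⊗ₜ[k] y) = φ y • x := by simp [contrR]
@[simp] lemma contrB_tmul (φ ψ : Module.Dual k Ω) (x y : Ω) :
    contrB (k := k) φ ψ (x ⊗ₜ[k] y) = φ x * ψ y := by simp [contrB]

noncomputable def Kmod (α β : Module.Dual k Ω) (star : Ω) :
    Submodule k ((Ω ⊗[k] Ω) × (Ω ⊗[k] Ω)) :=
  LinearMap.ker (contrL β ∘ₗ .fst k _ _ - contrL β ∘ₗ .snd k _ _) ⊓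
  LinearMap.ker (contrL α ∘ₗ .fst k _ _ - contrR β ∘ₗ .snd k _ _) ⊓
  LinearMap.ker (contrR α ∘ₗ .fst k _ _ - contrR α ∘ₗ .snd k _ _) ⊓
  LinearMap.ker (contrR β ∘ₗ .fst k _ _ - (contrB β β ∘ₗ .snd k _ _).smulRight star) ⊓
  LinearMap.ker ((contrB α α ∘ₗ .fst k _ _).smulRight star - contrL α ∘ₗ .snd k _ _)

lemma mem_Kmod (α β : Module.Dual k Ω) (star : Ω) (uv : (Ω ⊗[k] Ω) × (Ω ⊗[k] Ω)) :
    uv ∈ Kmod α β star ↔ CoherenceEqs α β star uv := by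
  simp [Kmod, CoherenceEqs, Submodule.mem_inf, LinearMap.mem_ker, sub_eq_zero, and_assoc]

variable {n : ℕ} (b : Module.Basis (Fin n) k Ω)

lemma contrL_coord (m : Fin n) (u : Ω ⊗[k] Ω) :
    contrL (b.coord m) u = ∑ j, (b.tensorProduct b).repr u (m, j) • b j := by
  conv_lhs => rw [← (b.tensorProduct b).sum_repr u]
  simp only [map_sum, map_smul, Module.Basis.tensorProduct_apply', contrL_tmul, Module.Basis.coord_apply,
    Module.Basis.repr_self_apply]
  rw [Fintype.sum_prod_type]
  rw [Finset.sum_comm]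
  congr 1; ext j
  rw [Finset.sum_eq_single m]
  · simp
  · intro i _ hi; simp [hi]
  · simp

lemma contrR_coord (m : Fin n) (u : Ω ⊗[k] Ω) :
    contrR (b.coord m) u = ∑ i, (b.tensorProduct b).repr u (i, m) • b i := by
  conv_lhs => rw [← (b.tensorProduct b).sum_repr u]
  simp only [map_sum, map_smul, Module.Basis.tensorProduct_apply', contrR_tmul, Module.Basis.coord_apply,
    Module.Basis.repr_self_apply]
  rw [Fintype.sum_prod_type]
  congr 1; ext i
  rw [Finset.sum_eq_single m]
  · simp
  · intro j _ hj; simp [hj]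
  · simp

lemma contrB_coord (m m' : Fin n) (u : Ω ⊗[k] Ω) :
    contrB (b.coord m) (b.coord m') u = (b.tensorProduct b).repr u (m, m') := by
  conv_lhs => rw [← (b.tensorProduct b).sum_repr u]
  simp only [map_sum, map_smul, Module.Basis.tensorProduct_apply', contrB_tmul, Module.Basis.coord_apply,
    Module.Basis.repr_self_apply, smul_eq_mul]
  rw [Fintype.sum_prod_type, Finset.sum_eq_single m]
  · rw [Finset.sum_eq_single m']
    · simp
    · intro j _ hj; simp [hj]
    · simp
  · intro i _ hi; simp [hi]
  · simp

lemma coords_unique {c d : Fin n → k} (h : ∑ i, c i • b i = ∑ i, d i • b i) : c = d := by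
  rw [← b.repr_sum_self c, ← b.repr_sum_self d, h]

lemma coord_basis (m i : Fin n) : b.coord m (b i) = if i = m then 1 else 0 := by
  simp [Module.Basis.coord_apply, Module.Basis.repr_self, Finsupp.single_apply]

lemma coord_sum (m : Fin n) : b.coord m (∑ i, b i) = 1 := by
  rw [map_sum]
  simp only [coord_basis]
  simp

-- sum splits
lemma filter1_eq {z : Fin n} (hz : (z : ℕ) = 0) :
    Finset.univ.filter (fun i : Fin n => 1 ≤ (i : ℕ)) = Finset.univ.erase z := by
  ext i; simp [Fin.ext_iff, hz]; omega

lemma filter2_eq {o : Fin n} (ho : (o : ℕ) = 1) :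
    Finset.univ.filter (fun i : Fin n => 2 ≤ (i : ℕ)) =
      (Finset.univ.filter (fun i : Fin n => 1 ≤ (i : ℕ))).erase o := by
  ext i; simp [Fin.ext_iff, ho]; omega

lemma sum_split1 {M : Type*} [AddCommMonoid M] {z : Fin n} (hz : (z : ℕ) = 0) (f : Fin n → M) :
    ∑ i, f i = f z + ∑ i ∈ Finset.univ.filter (fun i : Fin n => 1 ≤ (i : ℕ)), f i := by
  rw [filter1_eq hz]
  exact (Finset.add_sum_erase _ f (Finset.mem_univ _)).symm

lemma sum_splitF1 {M : Type*} [AddCommMonoid M] {o : Fin n} (ho : (o : ℕ) = 1) (f : Fin n → M) :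
    ∑ i ∈ Finset.univ.filter (fun i : Fin n => 1 ≤ (i : ℕ)), f i =
      f o + ∑ i ∈ Finset.univ.filter (fun i : Fin n => 2 ≤ (i : ℕ)), f i := by
  rw [filter2_eq ho]
  exact (Finset.add_sum_erase _ f (by simp [ho])).symm

lemma sum_split2 {M : Type*} [AddCommMonoid M] {z o : Fin n} (hz : (z : ℕ) = 0)
    (ho : (o : ℕ) = 1) (f : Fin n → M) :
    ∑ i, f i = f z + f o +
      ∑ i ∈ Finset.univ.filter (fun i : Fin n => 2 ≤ (i : ℕ)), f i := by
  rw [sum_split1 hz, sum_splitF1 ho, add_assoc]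

/-- The generating set. -/
def genSet (b : Module.Basis (Fin n) k Ω) (z o : Fin n) (star : Ω) :
    Set ((Ω ⊗[k] Ω) × (Ω ⊗[k] Ω)) :=
  ({(star ⊗ₜ[k] b o, b o ⊗ₜ[k] b o),
     (b z ⊗ₜ[k] b z, b z ⊗ₜ[k] star)} ∪
    {x | ∃ i : Fin n, 1 ≤ (i : ℕ) ∧ x = (b i ⊗ₜ[k] b z, b i ⊗ₜ[k] b z)} ∪
    {x | ∃ j : Fin n, 2 ≤ (j : ℕ) ∧ x = (b o ⊗ₜ[k] b j, b o ⊗ₜ[k] b j)} ∪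
    {x | ∃ i : Fin n, 2 ≤ (i : ℕ) ∧ x = (b z ⊗ₜ[k] b i, b i ⊗ₜ[k] b o)} ∪
    {x | ∃ i j : Fin n, 2 ≤ (i : ℕ) ∧ 2 ≤ (j : ℕ) ∧
      (x = (b i ⊗ₜ[k] b j, 0) ∨ x = (0, b i ⊗ₜ[k] b j))})

lemma key (z o : Fin n) (hz : (z : ℕ) = 0) (ho : (o : ℕ) = 1) :
    Kmod (b.coord z) (b.coord o) (∑ i, b i) ≤
      Submodule.span k (genSet b z o (∑ i, b i)) := by
  intro uv huv
  rw [mem_Kmod] at huv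
  obtain ⟨h1, h2, h3, h4, h5⟩ := huv
  rw [contrL_coord b o uv.1, contrL_coord b o uv.2] at h1
  rw [contrL_coord b z uv.1, contrR_coord b o uv.2] at h2
  rw [contrR_coord b z uv.1, contrR_coord b z uv.2] at h3
  rw [contrR_coord b o uv.1, contrB_coord b o o uv.2, Finset.smul_sum] at h4
  rw [contrB_coord b z z uv.1, contrL_coord b z uv.2, Finset.smul_sum] at h5
  set U : Fin n × Fin n → k := fun p => (b.tensorProduct b).repr uv.1 p with hU
  set V : Fin n × Fin n → k := fun p => (b.tensorProduct b).repr uv.2 p with hV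
  have r1 : ∀ a : Fin n, U (o, a) = V (o, a) := congrFun (coords_unique b h1)
  have r2 : ∀ a : Fin n, U (z, a) = V (a, o) := congrFun (coords_unique b h2)
  have r3 : ∀ a : Fin n, U (a, z) = V (a, z) := congrFun (coords_unique b h3)
  have r4 : ∀ a : Fin n, U (a, o) = V (o, o) := congrFun (coords_unique b h4)
  have r5 : ∀ a : Fin n, U (z, z) = V (z, a) := congrFun (coords_unique b h5)
  set E : (Ω ⊗[k] Ω) × (Ω ⊗[k] Ω) :=
    V (o,o) • ((∑ i, b i) ⊗ₜ[k] b o, b o ⊗ₜ[k] b o)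
    + U (z,z) • (b z ⊗ₜ[k] b z, b z ⊗ₜ[k] (∑ i, b i))
    + ∑ i ∈ Finset.univ.filter (fun i : Fin n => 1 ≤ (i : ℕ)), U (i,z) • (b i ⊗ₜ[k] b z, b i ⊗ₜ[k] b z)
    + ∑ j ∈ Finset.univ.filter (fun i : Fin n => 2 ≤ (i : ℕ)), U (o,j) • (b o ⊗ₜ[k] b j, b o ⊗ₜ[k] b j)
    + ∑ j ∈ Finset.univ.filter (fun i : Fin n => 2 ≤ (i : ℕ)), U (z,j) • (b z ⊗ₜ[k] b j, b j ⊗ₜ[k] b o)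
    + ∑ i ∈ Finset.univ.filter (fun i : Fin n => 2 ≤ (i : ℕ)), ∑ j ∈ Finset.univ.filter (fun i : Fin n => 2 ≤ (i : ℕ)),
        (U (i,j) • (b i ⊗ₜ[k] b j, (0 : Ω ⊗[k] Ω))
          + V (i,j) • ((0 : Ω ⊗[k] Ω), b i ⊗ₜ[k] b j)) with hE
  have hmemE : E ∈ Submodule.span k (genSet b z o (∑ i, b i)) := by
    refine Submodule.add_mem _ (Submodule.add_mem _ (Submodule.add_mem _ (Submodule.add_mem _
      (Submodule.add_mem _ ?_ ?_) ?_) ?_) ?_) ?_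
    · exact Submodule.smul_mem _ _ (Submodule.subset_span
        (Or.inl (Or.inl (Or.inl (Or.inl (Or.inl rfl))))))
    · exact Submodule.smul_mem _ _ (Submodule.subset_span
        (Or.inl (Or.inl (Or.inl (Or.inl (Or.inr rfl))))))
    · refine Submodule.sum_mem _ fun i hi => Submodule.smul_mem _ _ (Submodule.subset_span ?_)
      exact Or.inl (Or.inl (Or.inl (Or.inr ⟨i, (Finset.mem_filter.mp hi).2, rfl⟩)))
    · refine Submodule.sum_mem _ fun j hj => Submodule.smul_mem _ _ (Submodule.subset_span ?_)
      exact Or.inl (Or.inl (Or.inr ⟨j, (Finset.mem_filter.mp hj).2, rfl⟩))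
    · refine Submodule.sum_mem _ fun j hj => Submodule.smul_mem _ _ (Submodule.subset_span ?_)
      exact Or.inl (Or.inr ⟨j, (Finset.mem_filter.mp hj).2, rfl⟩)
    · refine Submodule.sum_mem _ fun i hi => Submodule.sum_mem _ fun j hj =>
        Submodule.add_mem _ (Submodule.smul_mem _ _ (Submodule.subset_span ?_))
          (Submodule.smul_mem _ _ (Submodule.subset_span ?_))
      · exact Or.inr ⟨i, j, (Finset.mem_filter.mp hi).2, (Finset.mem_filter.mp hj).2, Or.inl rfl⟩
      · exact Or.inr ⟨i, j, (Finset.mem_filter.mp hi).2, (Finset.mem_filter.mp hj).2, Or.inr rfl⟩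
  suffices heq : uv = E by rw [heq]; exact hmemE
  have hu1 : uv.1 = ∑ j, ∑ i, U (i,j) • (b i ⊗ₜ[k] b j) := by
    conv_lhs => rw [← (b.tensorProduct b).sum_repr uv.1]
    rw [Fintype.sum_prod_type_right]
    simp [Module.Basis.tensorProduct_apply, hU]
  have hu2 : uv.2 = ∑ i, ∑ j, V (i,j) • (b i ⊗ₜ[k] b j) := by
    conv_lhs => rw [← (b.tensorProduct b).sum_repr uv.2]
    rw [Fintype.sum_prod_type]
    simp [Module.Basis.tensorProduct_apply, hV]
  refine Prod.ext ?_ ?_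
  · -- first component
    rw [hu1]
    have hE1 : E.1 = V (o,o) • ((∑ i, b i) ⊗ₜ[k] b o) + U (z,z) • (b z ⊗ₜ[k] b z)
        + ∑ i ∈ Finset.univ.filter (fun i : Fin n => 1 ≤ (i : ℕ)), U (i,z) • (b i ⊗ₜ[k] b z)
        + ∑ j ∈ Finset.univ.filter (fun i : Fin n => 2 ≤ (i : ℕ)), U (o,j) • (b o ⊗ₜ[k] b j)
        + ∑ j ∈ Finset.univ.filter (fun i : Fin n => 2 ≤ (i : ℕ)), U (z,j) • (b z ⊗ₜ[k] b j)
        + ∑ i ∈ Finset.univ.filter (fun i : Fin n => 2 ≤ (i : ℕ)), ∑ j ∈ Finset.univ.filter (fun i : Fin n => 2 ≤ (i : ℕ)), U (i,j) • (b i ⊗ₜ[k] b j) := by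
      simp [hE, Prod.fst_sum]
    rw [hE1]
    rw [sum_split2 hz ho (f := fun j => ∑ i, U (i,j) • (b i ⊗ₜ[k] b j))]
    have t1 : ∑ i, U (i,z) • (b i ⊗ₜ[k] b z)
        = U (z,z) • (b z ⊗ₜ[k] b z) + ∑ i ∈ Finset.univ.filter (fun i : Fin n => 1 ≤ (i : ℕ)), U (i,z) • (b i ⊗ₜ[k] b z) :=
      sum_split1 hz _
    have t2 : ∑ i, U (i,o) • (b i ⊗ₜ[k] b o) = V (o,o) • ((∑ i, b i) ⊗ₜ[k] b o) := by
      rw [TensorProduct.sum_tmul, Finset.smul_sum]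
      exact Finset.sum_congr rfl fun i _ => by rw [r4 i]
    have t3 : ∑ j ∈ Finset.univ.filter (fun i : Fin n => 2 ≤ (i : ℕ)), (∑ i, U (i,j) • (b i ⊗ₜ[k] b j))
        = ∑ j ∈ Finset.univ.filter (fun i : Fin n => 2 ≤ (i : ℕ)), U (z,j) • (b z ⊗ₜ[k] b j)
          + ∑ j ∈ Finset.univ.filter (fun i : Fin n => 2 ≤ (i : ℕ)), U (o,j) • (b o ⊗ₜ[k] b j)
          + ∑ j ∈ Finset.univ.filter (fun i : Fin n => 2 ≤ (i : ℕ)), ∑ i ∈ Finset.univ.filter (fun i : Fin n => 2 ≤ (i : ℕ)), U (i,j) • (b i ⊗ₜ[k] b j) := by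
      rw [← Finset.sum_add_distrib, ← Finset.sum_add_distrib]
      exact Finset.sum_congr rfl fun j _ => sum_split2 hz ho _
    have t4 : ∑ j ∈ Finset.univ.filter (fun i : Fin n => 2 ≤ (i : ℕ)), ∑ i ∈ Finset.univ.filter (fun i : Fin n => 2 ≤ (i : ℕ)), U (i,j) • (b i ⊗ₜ[k] b j)
        = ∑ i ∈ Finset.univ.filter (fun i : Fin n => 2 ≤ (i : ℕ)), ∑ j ∈ Finset.univ.filter (fun i : Fin n => 2 ≤ (i : ℕ)), U (i,j) • (b i ⊗ₜ[k] b j) := Finset.sum_comm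
    rw [t1, t2, t3, t4]
    abel
  · -- second component
    rw [hu2]
    have hE2 : E.2 = V (o,o) • (b o ⊗ₜ[k] b o) + U (z,z) • (b z ⊗ₜ[k] (∑ i, b i))
        + ∑ i ∈ Finset.univ.filter (fun i : Fin n => 1 ≤ (i : ℕ)), U (i,z) • (b i ⊗ₜ[k] b z)
        + ∑ j ∈ Finset.univ.filter (fun i : Fin n => 2 ≤ (i : ℕ)), U (o,j) • (b o ⊗ₜ[k] b j)
        + ∑ j ∈ Finset.univ.filter (fun i : Fin n => 2 ≤ (i : ℕ)), U (z,j) • (b j ⊗ₜ[k] b o)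
        + ∑ i ∈ Finset.univ.filter (fun i : Fin n => 2 ≤ (i : ℕ)), ∑ j ∈ Finset.univ.filter (fun i : Fin n => 2 ≤ (i : ℕ)), V (i,j) • (b i ⊗ₜ[k] b j) := by
      simp [hE, Prod.snd_sum]
    rw [hE2]
    rw [sum_split2 hz ho (f := fun i => ∑ j, V (i,j) • (b i ⊗ₜ[k] b j))]
    have s1 : ∑ j, V (z,j) • (b z ⊗ₜ[k] b j) = U (z,z) • (b z ⊗ₜ[k] (∑ i, b i)) := by
      rw [TensorProduct.tmul_sum, Finset.smul_sum]
      exact Finset.sum_congr rfl fun j _ => by rw [← r5 j]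
    have s2 : ∑ j, V (o,j) • (b o ⊗ₜ[k] b j)
        = U (o,z) • (b o ⊗ₜ[k] b z) + V (o,o) • (b o ⊗ₜ[k] b o)
          + ∑ j ∈ Finset.univ.filter (fun i : Fin n => 2 ≤ (i : ℕ)), U (o,j) • (b o ⊗ₜ[k] b j) := by
      rw [sum_split2 hz ho (f := fun j => V (o,j) • (b o ⊗ₜ[k] b j))]
      congr 1
      · congr 1
        rw [r3 o]
      · exact Finset.sum_congr rfl fun j _ => by rw [r1 j]
    have s3 : ∑ i ∈ Finset.univ.filter (fun i : Fin n => 2 ≤ (i : ℕ)), (∑ j, V (i,j) • (b i ⊗ₜ[k] b j))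
        = ∑ i ∈ Finset.univ.filter (fun i : Fin n => 2 ≤ (i : ℕ)), U (i,z) • (b i ⊗ₜ[k] b z)
          + ∑ i ∈ Finset.univ.filter (fun i : Fin n => 2 ≤ (i : ℕ)), U (z,i) • (b i ⊗ₜ[k] b o)
          + ∑ i ∈ Finset.univ.filter (fun i : Fin n => 2 ≤ (i : ℕ)), ∑ j ∈ Finset.univ.filter (fun i : Fin n => 2 ≤ (i : ℕ)), V (i,j) • (b i ⊗ₜ[k] b j) := by
      rw [← Finset.sum_add_distrib, ← Finset.sum_add_distrib]
      refine Finset.sum_congr rfl fun i _ => ?_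
      rw [sum_split2 hz ho (f := fun j => V (i,j) • (b i ⊗ₜ[k] b j))]
      rw [← r3 i, ← r2 i]
    have s4 : ∑ i ∈ Finset.univ.filter (fun i : Fin n => 1 ≤ (i : ℕ)), U (i,z) • (b i ⊗ₜ[k] b z)
        = U (o,z) • (b o ⊗ₜ[k] b z) + ∑ i ∈ Finset.univ.filter (fun i : Fin n => 2 ≤ (i : ℕ)), U (i,z) • (b i ⊗ₜ[k] b z) :=
      sum_splitF1 ho _
    rw [s1, s2, s3, s4]
    abel

lemma genSet_sub_K (z o : Fin n) (hz : (z : ℕ) = 0) (ho : (o : ℕ) = 1) :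
    genSet b z o (∑ i, b i) ⊆
      (Kmod (b.coord z) (b.coord o) (∑ i, b i) : Set _) := by
  have hoz : o ≠ z := by simp [Fin.ext_iff, hz, ho]
  intro x hx
  simp only [genSet, Set.mem_union, Set.mem_insert_iff, Set.mem_singleton_iff,
    Set.mem_setOf_eq] at hx
  rw [SetLike.mem_coe, mem_Kmod]
  rcases hx with ((((h | h) | ⟨i, hi, h⟩) | ⟨j, hj, h⟩) | ⟨i, hi, h⟩) | ⟨i, j, hi, hj, h⟩
  · subst h
    refine ⟨?_, ?_, ?_, ?_, ?_⟩ <;>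
      simp [coord_sum, coord_basis, hoz, smul_smul]
  · subst h
    have hzo : z ≠ o := Ne.symm hoz
    refine ⟨?_, ?_, ?_, ?_, ?_⟩ <;>
      simp [coord_sum, coord_basis, hzo, smul_smul]
  · subst h
    have h1 : i ≠ z := by simp [hz, Fin.ext_iff]; omega
    have h2 : z ≠ o := Ne.symm hoz
    refine ⟨?_, ?_, ?_, ?_, ?_⟩ <;>
      simp [coord_sum, coord_basis, h1, h2, hoz, smul_smul]
  · subst h
    have h1 : j ≠ z := by simp [hz, Fin.ext_iff]; omega
    have h2 : j ≠ o := by simp [ho, Fin.ext_iff]; omega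
    refine ⟨?_, ?_, ?_, ?_, ?_⟩ <;>
      simp [coord_sum, coord_basis, h1, h2, hoz, smul_smul]
  · subst h
    have h1 : i ≠ z := by simp [hz, Fin.ext_iff]; omega
    have h2 : i ≠ o := by simp [ho, Fin.ext_iff]; omega
    have h3 : z ≠ o := Ne.symm hoz
    refine ⟨?_, ?_, ?_, ?_, ?_⟩ <;>
      simp [coord_sum, coord_basis, h1, h2, h3, hoz, smul_smul]
  · have h1 : i ≠ z := by simp [hz, Fin.ext_iff]; omega
    have h2 : i ≠ o := by simp [ho, Fin.ext_iff]; omega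
    have h3 : j ≠ z := by simp [hz, Fin.ext_iff]; omega
    have h4 : j ≠ o := by simp [ho, Fin.ext_iff]; omega
    rcases h with h | h <;> subst h <;>
      refine ⟨?_, ?_, ?_, ?_, ?_⟩ <;>
        simp [coord_sum, coord_basis, h1, h2, h3, h4, smul_smul]

end Aux

lemma exists_adapted_basis {k : Type*} [Field k] {Ω : Type*} [AddCommGroup Ω] [Module k Ω]
    [FiniteDimensional k Ω] {n : ℕ} (hn : 2 ≤ n) (hdim : Module.finrank k Ω = n)
    {α β : Module.Dual k Ω} {star : Ω}
    (hα : α star = 1) (hβ : β star = 1) (hne : α ≠ β) :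
    ∃ b : Module.Basis (Fin n) k Ω, star = ∑ i, b i ∧
      α = b.coord ⟨0, Nat.lt_of_lt_of_le (by decide) hn⟩ ∧ β = b.coord ⟨1, Nat.lt_of_lt_of_le (by decide) hn⟩ := by
  classical
  obtain ⟨y, hy⟩ : ∃ y, α y ≠ β y := by
    by_contra h
    push_neg at h
    exact hne (LinearMap.ext h)
  set s : Ω := y - α y • star with hs
  have hαs : α s = 0 := by simp [hs, hα]
  have hβs : β s = β y - α y := by simp [hs, hβ]
  have hβs0 : β s ≠ 0 := by rw [hβs]; exact sub_ne_zero.mpr (Ne.symm hy)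
  set x1 : Ω := (β s)⁻¹ • s with hx1
  have hx1a : α x1 = 0 := by simp [hx1, hαs]
  have hx1b : β x1 = 1 := by simp [hx1, inv_mul_cancel₀ hβs0]
  -- the kernel
  set D := α.prod β with hD
  have hsurj : Function.Surjective D := by
    rintro ⟨c1, c2⟩
    refine ⟨c1 • star + (c2 - c1) • x1, ?_⟩
    simp [hD, LinearMap.prod_apply, hα, hβ, hx1a, hx1b, Prod.ext_iff]
  have hWrank : Module.finrank k ↥(LinearMap.ker D) = n - 2 := by
    have h := D.finrank_range_add_finrank_ker
    rw [LinearMap.range_eq_top.mpr hsurj, finrank_top, hdim] at h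
    have h2 : Module.finrank k (k × k) = 2 := by
      simp [Module.finrank_prod]
    omega
  let fW : Module.Basis (Fin (n - 2)) k ↥(LinearMap.ker D) :=
    Module.finBasisOfFinrankEq k _ hWrank
  have hfker : ∀ j : Fin (n - 2), α (fW j : Ω) = 0 ∧ β (fW j : Ω) = 0 := by
    intro j
    have := (fW j).2
    simpa [hD, LinearMap.mem_ker, LinearMap.prod_apply, Prod.ext_iff] using this
  set h : Fin n → Ω := fun i =>
    if hi : 2 ≤ (i : ℕ) then (fW ⟨(i : ℕ) - 2, by omega⟩ : Ω) else 0 with hh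
  have hhker : ∀ i, α (h i) = 0 ∧ β (h i) = 0 := by
    intro i
    by_cases hi : 2 ≤ (i : ℕ)
    · simp only [hh, dif_pos hi]
      exact hfker _
    · simp [hh, dif_neg hi]
  set Sm : Ω := ∑ i ∈ Finset.univ.filter (fun i : Fin n => 2 ≤ (i : ℕ)), h i with hSm
  have hαSm : α Sm = 0 := by
    rw [hSm, map_sum]
    exact Finset.sum_eq_zero fun i _ => (hhker i).1
  have hβSm : β Sm = 0 := by
    rw [hSm, map_sum]
    exact Finset.sum_eq_zero fun i _ => (hhker i).2
  set g : Fin n → Ω := fun i =>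
    if (i : ℕ) = 0 then star - x1 - Sm else if (i : ℕ) = 1 then x1 else h i with hg
  have hαg : ∀ i, α (g i) = if (i : ℕ) = 0 then 1 else 0 := by
    intro i
    by_cases h0 : (i : ℕ) = 0
    · simp [hg, h0, hα, hx1a, hαSm]
    · by_cases h1 : (i : ℕ) = 1
      · simp [hg, h0, h1, hx1a]
      · simp [hg, h0, h1, (hhker i).1]
  have hβg : ∀ i, β (g i) = if (i : ℕ) = 1 then 1 else 0 := by
    intro i
    by_cases h0 : (i : ℕ) = 0
    · simp [hg, h0, hβ, hx1b, hβSm]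
    · by_cases h1 : (i : ℕ) = 1
      · simp [hg, h0, h1, hx1b]
      · simp [hg, h0, h1, (hhker i).2]
  have hfg : ∀ j : Fin (n - 2), (fW j : Ω) = g ⟨(j : ℕ) + 2, by omega⟩ := by
    intro j
    have hval : ((⟨(j : ℕ) + 2, by omega⟩ : Fin n) : ℕ) = (j : ℕ) + 2 := rfl
    simp only [hg, hval, hh]
    rw [if_neg (by omega), if_neg (by omega), dif_pos (by omega)]
    have hj : (⟨(j : ℕ) + 2 - 2, by omega⟩ : Fin (n - 2)) = j := Fin.ext (by simp)
    rw [hj]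
  have hspan : ⊤ ≤ Submodule.span k (Set.range g) := by
    rintro x -
    have hg0 : g ⟨0, by omega⟩ ∈ Submodule.span k (Set.range g) :=
      Submodule.subset_span ⟨_, rfl⟩
    have hg1 : g ⟨1, by omega⟩ ∈ Submodule.span k (Set.range g) :=
      Submodule.subset_span ⟨_, rfl⟩
    have hWle : ∀ w ∈ LinearMap.ker D, w ∈ Submodule.span k (Set.range g) := by
      intro w hw
      have hrepr : w = ∑ i, fW.repr ⟨w, hw⟩ i • (fW i : Ω) := by
        have := congrArg (Submodule.subtype _) (fW.sum_repr ⟨w, hw⟩)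
        simp only [map_sum, map_smul, Submodule.subtype_apply] at this
        exact this.symm
      rw [hrepr]
      exact Submodule.sum_mem _ fun i _ => Submodule.smul_mem _ _
        (by rw [hfg i]; exact Submodule.subset_span ⟨_, rfl⟩)
    have hxw : x - α x • g ⟨0, by omega⟩ - β x • g ⟨1, by omega⟩ ∈ LinearMap.ker D := by
      simp [hD, LinearMap.mem_ker, LinearMap.prod_apply, Prod.ext_iff, map_sub, map_smul,
        hαg, hβg]
    have hx : x = (x - α x • g ⟨0, by omega⟩ - β x • g ⟨1, by omega⟩)
        + α x • g ⟨0, by omega⟩ + β x • g ⟨1, by omega⟩ := by abel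
    rw [hx]
    exact Submodule.add_mem _ (Submodule.add_mem _ (hWle _ hxw)
      (Submodule.smul_mem _ _ hg0)) (Submodule.smul_mem _ _ hg1)
  have hcard : Fintype.card (Fin n) = Module.finrank k Ω := by simp [hdim]
  let b : Module.Basis (Fin n) k Ω := basisOfTopLeSpanOfCardEqFinrank g hspan hcard
  have hb : ⇑b = g := coe_basisOfTopLeSpanOfCardEqFinrank g hspan hcard
  refine ⟨b, ?_, ?_, ?_⟩
  · -- star = ∑ b i
    have hbg : ∑ i, b i = ∑ i, g i := Finset.sum_congr rfl fun i _ => congrFun hb i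
    have htail : ∑ i ∈ Finset.univ.filter (fun i : Fin n => 2 ≤ (i : ℕ)), g i = Sm := by
      rw [hSm]
      refine Finset.sum_congr rfl fun i hi => ?_
      have h2i : 2 ≤ (i : ℕ) := (Finset.mem_filter.mp hi).2
      have hni0 : ¬((i : ℕ) = 0) := by omega
      have hni1 : ¬((i : ℕ) = 1) := by omega
      simp only [hg]
      rw [if_neg hni0, if_neg hni1]
    have h0 : g ⟨0, by omega⟩ = star - x1 - Sm := by simp [hg]
    have h1 : g ⟨1, by omega⟩ = x1 := by simp [hg]
    rw [hbg, sum_split2 (z := ⟨0, by omega⟩) (o := ⟨1, by omega⟩) rfl rfl g, htail, h0, h1]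
    abel
  · apply b.ext
    intro i
    rw [coord_basis, congrFun hb i, hαg i]
    by_cases h0 : (i : ℕ) = 0
    · simp [h0, Fin.ext_iff]
    · simp [h0, Fin.ext_iff]
  · apply b.ext
    intro i
    rw [coord_basis, congrFun hb i, hβg i]
    by_cases h1 : (i : ℕ) = 1
    · simp [h1, Fin.ext_iff]
    · simp [h1, Fin.ext_iff]


/-- Classification of coherent unit actions with α ≠ β (Theorem 3.1(1)). -/
theorem coherent_neq_classification
    {k : Type*} [Field k] [CharZero k]
    {Ω : Type*} [AddCommGroup Ω] [Module k Ω] [FiniteDimensional k Ω]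
    (n : ℕ) (hn : 2 ≤ n) (hdim : Module.finrank k Ω = n)
    (star : Ω) (Λ : Submodule k ((Ω ⊗[k] Ω) × (Ω ⊗[k] Ω))) :
    (∃ α β : Module.Dual k Ω,
        α star = 1 ∧ β star = 1 ∧ α ≠ β ∧ IsCoherent α β star Λ) ↔
    (∃ b : Module.Basis (Fin n) k Ω, star = ∑ i, b i ∧
      Λ ≤ Submodule.span k
        (({(star ⊗ₜ[k] b ⟨1, by omega⟩, b ⟨1, by omega⟩ ⊗ₜ[k] b ⟨1, by omega⟩),
           (b ⟨0, by omega⟩ ⊗ₜ[k] b ⟨0, by omega⟩, b ⟨0, by omega⟩ ⊗ₜ[k] star)} ∪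
          {x | ∃ i : Fin n, 1 ≤ (i : ℕ) ∧
            x = (b i ⊗ₜ[k] b ⟨0, by omega⟩, b i ⊗ₜ[k] b ⟨0, by omega⟩)} ∪
          {x | ∃ j : Fin n, 2 ≤ (j : ℕ) ∧
            x = (b ⟨1, by omega⟩ ⊗ₜ[k] b j, b ⟨1, by omega⟩ ⊗ₜ[k] b j)} ∪
          {x | ∃ i : Fin n, 2 ≤ (i : ℕ) ∧
            x = (b ⟨0, by omega⟩ ⊗ₜ[k] b i, b i ⊗ₜ[k] b ⟨1, by omega⟩)} ∪
          {x | ∃ i j : Fin n, 2 ≤ (i : ℕ) ∧ 2 ≤ (j : ℕ) ∧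
            (x = (b i ⊗ₜ[k] b j, 0) ∨ x = (0, b i ⊗ₜ[k] b j))} :
          Set ((Ω ⊗[k] Ω) × (Ω ⊗[k] Ω))))) := by
  constructor
  · rintro ⟨α, β, hα, hβ, hne, hcoh⟩
    obtain ⟨b, hstar, hαc, hβc⟩ := exists_adapted_basis hn hdim hα hβ hne
    refine ⟨b, hstar, ?_⟩
    intro uv huv
    have hm : uv ∈ Kmod (b.coord ⟨0, by omega⟩) (b.coord ⟨1, by omega⟩) star := by
      rw [← hαc, ← hβc]
      exact (mem_Kmod _ _ _ _).mpr (hcoh uv huv)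
    rw [hstar] at hm
    rw [hstar]
    exact key b ⟨0, by omega⟩ ⟨1, by omega⟩ rfl rfl hm
  · rintro ⟨b, hstar, hle⟩
    subst hstar
    refine ⟨b.coord ⟨0, by omega⟩, b.coord ⟨1, by omega⟩, coord_sum b _, coord_sum b _, ?_, ?_⟩
    · intro hcontra
      have h2 : b.coord ⟨0, by omega⟩ (b ⟨0, by omega⟩)
          = b.coord ⟨1, by omega⟩ (b ⟨0, by omega⟩) := by rw [hcontra]
      rw [coord_basis, coord_basis] at h2
      simp [Fin.ext_iff] at h2
    · intro uv huv
      rw [← mem_Kmod]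
      exact Submodule.span_le.mpr (genSet_sub_K b ⟨0, by omega⟩ ⟨1, by omega⟩ rfl rfl) (hle huv)
end

section
/- Let k be a field of characteristic zero, let Ω₁ and Ω₂ be finite-dimensional k-vector spaces, let ⋆ᵢ ∈ Ωᵢ, let Λᵢ be a subspace of (Ωᵢ⊗Ωᵢ) ⊕ (Ωᵢ⊗Ωᵢ), and let (αᵢ, βᵢ) be a unit action for ⋆ᵢ that is compatible with Λᵢ, for i = 1, 2. Then (α₁⊗α₂, β₁⊗β₂) is a unit action for ⋆₁⊗⋆₂ ∈ Ω₁⊗Ω₂ that is compatible with the black square product Λ₁ ⊠ Λ₂ ⊆ ((Ω₁⊗Ω₂)⊗(Ω₁⊗Ω₂)) ⊕ ((Ω₁⊗Ω₂)⊗(Ω₁⊗Ω₂)). -/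
open TensorProduct

/-- The black square product of two relation spaces. -/
noncomputable def blackSquare {k : Type*} [Field k]
    {Ω₁ Ω₂ : Type*} [AddCommGroup Ω₁] [Module k Ω₁] [AddCommGroup Ω₂] [Module k Ω₂]
    (Λ₁ : Submodule k ((Ω₁ ⊗[k] Ω₁) × (Ω₁ ⊗[k] Ω₁)))
    (Λ₂ : Submodule k ((Ω₂ ⊗[k] Ω₂) × (Ω₂ ⊗[k] Ω₂))) :
    Submodule k
      (((Ω₁ ⊗[k] Ω₂) ⊗[k] (Ω₁ ⊗[k] Ω₂)) × ((Ω₁ ⊗[k] Ω₂) ⊗[k] (Ω₁ ⊗[k] Ω₂))) :=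
  Submodule.span k
    {x | ∃ p₁ ∈ Λ₁, ∃ p₂ ∈ Λ₂,
      x = (TensorProduct.tensorTensorTensorComm k Ω₁ Ω₁ Ω₂ Ω₂ (p₁.1 ⊗ₜ[k] p₂.1),
           TensorProduct.tensorTensorTensorComm k Ω₁ Ω₁ Ω₂ Ω₂ (p₁.2 ⊗ₜ[k] p₂.2))}


section Aux
variable {k : Type*} [Field k]
variable {Ω₁ Ω₂ : Type*} [AddCommGroup Ω₁] [Module k Ω₁] [AddCommGroup Ω₂] [Module k Ω₂]

lemma contrL_ttc (φ₁ : Module.Dual k Ω₁) (φ₂ : Module.Dual k Ω₂)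
    (x : (Ω₁ ⊗[k] Ω₁) ⊗[k] (Ω₂ ⊗[k] Ω₂)) :
    contrL (contrB φ₁ φ₂) (TensorProduct.tensorTensorTensorComm k Ω₁ Ω₁ Ω₂ Ω₂ x)
      = TensorProduct.map (contrL φ₁) (contrL φ₂) x := by
  have : (contrL (contrB φ₁ φ₂)).comp
      (TensorProduct.tensorTensorTensorComm k Ω₁ Ω₁ Ω₂ Ω₂).toLinearMap
      = TensorProduct.map (contrL φ₁) (contrL φ₂) := by
    ext a b c d
    simp only [contrL, contrB, LinearMap.coe_comp, Function.comp_apply, LinearEquiv.coe_coe,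
      TensorProduct.AlgebraTensorModule.curry_apply, TensorProduct.curry_apply,
      LinearMap.coe_restrictScalars, TensorProduct.tensorTensorTensorComm_tmul,
      TensorProduct.map_tmul, LinearMap.id_coe, id_eq, TensorProduct.lid_tmul,
      TensorProduct.smul_tmul', smul_smul]
    rw [smul_eq_mul, mul_comm, mul_smul, TensorProduct.smul_tmul]
  exact congrArg (fun f => f x) (congrArg DFunLike.coe this)

lemma contrR_ttc (φ₁ : Module.Dual k Ω₁) (φ₂ : Module.Dual k Ω₂)
    (x : (Ω₁ ⊗[k] Ω₁) ⊗[k] (Ω₂ ⊗[k] Ω₂)) :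
    contrR (contrB φ₁ φ₂) (TensorProduct.tensorTensorTensorComm k Ω₁ Ω₁ Ω₂ Ω₂ x)
      = TensorProduct.map (contrR φ₁) (contrR φ₂) x := by
  have : (contrR (contrB φ₁ φ₂)).comp
      (TensorProduct.tensorTensorTensorComm k Ω₁ Ω₁ Ω₂ Ω₂).toLinearMap
      = TensorProduct.map (contrR φ₁) (contrR φ₂) := by
    ext a b c d
    simp only [contrR, contrB, LinearMap.coe_comp, Function.comp_apply, LinearEquiv.coe_coe,
      TensorProduct.AlgebraTensorModule.curry_apply, TensorProduct.curry_apply,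
      LinearMap.coe_restrictScalars, TensorProduct.tensorTensorTensorComm_tmul,
      TensorProduct.map_tmul, LinearMap.id_coe, id_eq, TensorProduct.lid_tmul,
      TensorProduct.rid_tmul, TensorProduct.smul_tmul', smul_smul]
    rw [smul_eq_mul, mul_comm, mul_smul, TensorProduct.smul_tmul]
  exact congrArg (fun f => f x) (congrArg DFunLike.coe this)

lemma compatEqs_zero (α β : Module.Dual k Ω₁) :
    CompatEqs α β (0 : (Ω₁ ⊗[k] Ω₁) × (Ω₁ ⊗[k] Ω₁)) := by
  refine ⟨?_, ?_, ?_⟩ <;> simp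

lemma compatEqs_add (α β : Module.Dual k Ω₁)
    {x y : (Ω₁ ⊗[k] Ω₁) × (Ω₁ ⊗[k] Ω₁)} (hx : CompatEqs α β x) (hy : CompatEqs α β y) :
    CompatEqs α β (x + y) := by
  obtain ⟨h1, h2, h3⟩ := hx
  obtain ⟨g1, g2, g3⟩ := hy
  refine ⟨?_, ?_, ?_⟩ <;> simp [Prod.fst_add, Prod.snd_add, map_add, h1, h2, h3, g1, g2, g3]

lemma compatEqs_smul (α β : Module.Dual k Ω₁) (c : k)
    {x : (Ω₁ ⊗[k] Ω₁) × (Ω₁ ⊗[k] Ω₁)} (hx : CompatEqs α β x) :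
    CompatEqs α β (c • x) := by
  obtain ⟨h1, h2, h3⟩ := hx
  refine ⟨?_, ?_, ?_⟩ <;> simp [Prod.smul_fst, Prod.smul_snd, map_smul, h1, h2, h3]

end Aux

/-- Compatible unit actions are preserved by the black square product. -/
theorem blackSquare_compatible
    {k : Type*} [Field k] [CharZero k]
    {Ω₁ Ω₂ : Type*} [AddCommGroup Ω₁] [Module k Ω₁] [FiniteDimensional k Ω₁]
    [AddCommGroup Ω₂] [Module k Ω₂] [FiniteDimensional k Ω₂]
    (star₁ : Ω₁) (star₂ : Ω₂)
    (Λ₁ : Submodule k ((Ω₁ ⊗[k] Ω₁) × (Ω₁ ⊗[k] Ω₁)))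
    (Λ₂ : Submodule k ((Ω₂ ⊗[k] Ω₂) × (Ω₂ ⊗[k] Ω₂)))
    (α₁ β₁ : Module.Dual k Ω₁) (α₂ β₂ : Module.Dual k Ω₂)
    (hα₁ : α₁ star₁ = 1) (hβ₁ : β₁ star₁ = 1)
    (hα₂ : α₂ star₂ = 1) (hβ₂ : β₂ star₂ = 1)
    (h₁ : IsCompatible α₁ β₁ Λ₁) (h₂ : IsCompatible α₂ β₂ Λ₂) :
    contrB α₁ α₂ (star₁ ⊗ₜ[k] star₂) = 1 ∧
    contrB β₁ β₂ (star₁ ⊗ₜ[k] star₂) = 1 ∧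
    IsCompatible (contrB α₁ α₂) (contrB β₁ β₂) (blackSquare Λ₁ Λ₂) := by
  refine ⟨?_, ?_, ?_⟩
  · simp [contrB, hα₁, hα₂]
  · simp [contrB, hβ₁, hβ₂]
  · intro uv huv
    induction huv using Submodule.span_induction with
    | mem x hx =>
      obtain ⟨p₁, hp₁, p₂, hp₂, rfl⟩ := hx
      obtain ⟨a1, a2, a3⟩ := h₁ p₁ hp₁
      obtain ⟨b1, b2, b3⟩ := h₂ p₂ hp₂
      refine ⟨?_, ?_, ?_⟩ <;>
        simp [contrL_ttc, contrR_ttc, TensorProduct.map_tmul, a1, a2, a3, b1, b2, b3]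
    | zero => exact compatEqs_zero _ _
    | add x y _ _ hx hy => exact compatEqs_add _ _ hx hy
    | smul c x _ hx => exact compatEqs_smul _ _ c hx
end

section
/- Let k be a field of characteristic zero, let Ω be a k-vector space of finite dimension n ≥ 2, let ⋆ ∈ Ω with (⋆⊗⋆, ⋆⊗⋆) ∈ Λ, where Λ is a subspace of (Ω⊗Ω) ⊕ (Ω⊗Ω), and suppose some unit action (α, β) for ⋆ is compatible with Λ. Then for every ψ ∈ Ω* with (ψ⊗ψ, ψ⊗ψ) ∈ Λ^⊥ and every pair of linear maps α', β' : Ω* → k with α'(ψ) = β'(ψ) = 1, the pair (α', β') is not compatible with Λ^⊥; that is, some element of Λ^⊥ ⊆ (Ω*⊗Ω*) ⊕ (Ω*⊗Ω*) fails at least one of the compatibility equations (C1), (C2), (C3) for (α', β'). -/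
open TensorProduct

/-- The annihilator of Λ ⊆ (Ω⊗Ω) ⊕ (Ω⊗Ω) in (Ω*⊗Ω*) ⊕ (Ω*⊗Ω*) under the pairing
⟨(u,v),(γ,δ)⟩ = ⟨u,γ⟩ − ⟨v,δ⟩. -/
noncomputable def annih {k : Type*} [Field k] {Ω : Type*} [AddCommGroup Ω] [Module k Ω]
    (Λ : Submodule k ((Ω ⊗[k] Ω) × (Ω ⊗[k] Ω))) :
    Submodule k
      ((Module.Dual k Ω ⊗[k] Module.Dual k Ω) × (Module.Dual k Ω ⊗[k] Module.Dual k Ω)) where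
  carrier := {gd | ∀ uv ∈ Λ,
    TensorProduct.dualDistrib k Ω Ω gd.1 uv.1 - TensorProduct.dualDistrib k Ω Ω gd.2 uv.2 = 0}
  add_mem' := by
    intro a b ha hb uv huv
    have h1 := ha uv huv
    have h2 := hb uv huv
    simp only [Prod.fst_add, Prod.snd_add, map_add, LinearMap.add_apply]
    linear_combination h1 + h2
  zero_mem' := by
    intro uv huv
    simp
  smul_mem' := by
    intro c a ha uv huv
    have h1 := ha uv huv
    simp only [Prod.smul_fst, Prod.smul_snd, map_smul, LinearMap.smul_apply, smul_eq_mul]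
    linear_combination c * h1

/-- No compatible unit action on the dual operad (Theorem 4.4(2), compatible case). -/
theorem dual_no_compatible_unit_action
    {k : Type*} [Field k] [CharZero k]
    {Ω : Type*} [AddCommGroup Ω] [Module k Ω] [FiniteDimensional k Ω]
    (n : ℕ) (hn : 2 ≤ n) (hdim : Module.finrank k Ω = n)
    (star : Ω) (Λ : Submodule k ((Ω ⊗[k] Ω) × (Ω ⊗[k] Ω)))
    (hstar : (star ⊗ₜ[k] star, star ⊗ₜ[k] star) ∈ Λ)
    (α β : Module.Dual k Ω) (hα : α star = 1) (hβ : β star = 1)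
    (hcomp : IsCompatible α β Λ) :
    ∀ ψ : Module.Dual k Ω, (ψ ⊗ₜ[k] ψ, ψ ⊗ₜ[k] ψ) ∈ annih Λ →
      ∀ α' β' : Module.Dual k (Module.Dual k Ω), α' ψ = 1 → β' ψ = 1 →
        ¬ IsCompatible α' β' (annih Λ) := by
  intro ψ hψ α' β' hα' hβ' hcompat'
  -- key lemma: pairing of a pure dual tensor against u via contractions
  have keyL : ∀ (φ χ : Module.Dual k Ω) (u : Ω ⊗[k] Ω),
      TensorProduct.dualDistrib k Ω Ω (φ ⊗ₜ[k] χ) u = χ (contrL φ u) := by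
    intro φ χ u
    induction u using TensorProduct.induction_on with
    | zero => simp
    | tmul a b =>
        simp [contrL, TensorProduct.dualDistrib_apply, TensorProduct.map_tmul,
          TensorProduct.lid_tmul, smul_eq_mul]
    | add x y hx hy => simp [map_add, hx, hy]
  have keyR : ∀ (φ χ : Module.Dual k Ω) (u : Ω ⊗[k] Ω),
      TensorProduct.dualDistrib k Ω Ω (φ ⊗ₜ[k] χ) u = φ (contrR χ u) := by
    intro φ χ u
    induction u using TensorProduct.induction_on with
    | zero => simp
    | tmul a b =>
        simp [contrR, TensorProduct.dualDistrib_apply, TensorProduct.map_tmul,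
          TensorProduct.rid_tmul, smul_eq_mul, mul_comm]
    | add x y hx hy => simp [map_add, hx, hy]
  -- the family (α ⊗ f, f ⊗ β) lies in the annihilator, by (C2) for (α, β)
  have hmem : ∀ f : Module.Dual k Ω, (α ⊗ₜ[k] f, f ⊗ₜ[k] β) ∈ annih Λ := by
    intro f uv huv
    have h2 := (hcomp uv huv).2.1
    rw [keyL α f uv.1, keyR f β uv.2, h2, sub_self]
  -- apply (C3) for (α', β') to this family
  have hE : ∀ f : Module.Dual k Ω, α' f • α = α' β • f := by
    intro f
    have h3 := (hcompat' _ (hmem f)).2.2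
    simpa [contrR, TensorProduct.map_tmul, TensorProduct.rid_tmul] using h3
  by_cases hc : α' β = 0
  · have h := hE ψ
    rw [hα', hc, one_smul, zero_smul] at h
    have : (1 : k) = 0 := by rw [← hα, h, LinearMap.zero_apply]
    exact one_ne_zero this
  · -- every dual vector lies in the span of α, contradicting finrank ≥ 2
    have hspan : (⊤ : Submodule k (Module.Dual k Ω)) ≤ Submodule.span k {α} := by
      intro f _
      have h := hE f
      have : f = (α' β)⁻¹ • (α' f • α) := by
        rw [h, smul_smul, inv_mul_cancel₀ hc, one_smul]
      rw [this]
      exact Submodule.smul_mem _ _ (Submodule.smul_mem _ _ (Submodule.mem_span_singleton_self α))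
    have hαne : α ≠ 0 := fun h => by simp [h] at hα
    have htop : Submodule.span k {α} = ⊤ := top_le_iff.mp hspan
    have h1 : Module.finrank k (Module.Dual k Ω) = 1 := by
      rw [← finrank_top k (Module.Dual k Ω), ← htop]
      exact finrank_span_singleton hαne
    rw [Subspace.dual_finrank_eq, hdim] at h1
    omega
end

section
/- Let k be a field of characteristic zero and let Ω be the 2-dimensional k-vector space with basis {≺, ≻}, let ⋆ = ≺ + ≻, and let Λ_D ⊆ (Ω⊗Ω) ⊕ (Ω⊗Ω) be the dendriform dialgebra relation space. Then a pair of linear maps α, β : Ω → k with α(⋆) = β(⋆) = 1 is compatible with Λ_D if and only if α(≺) = 1, α(≻) = 0, β(≺) = 0 and β(≻) = 1; moreover this unique compatible unit action is coherent with Λ_D. -/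
open TensorProduct

/-- The dendriform dialgebra has a unique compatible unit action, which is coherent. -/
theorem dendriform_dialgebra_unit_action
    {k : Type*} [Field k] [CharZero k]
    {Ω : Type*} [AddCommGroup Ω] [Module k Ω]
    (b : Module.Basis (Fin 2) k Ω) :
    ∀ star : Ω, star = b 0 + b 1 →
    ∀ ΛD : Submodule k ((Ω ⊗[k] Ω) × (Ω ⊗[k] Ω)),
      ΛD = Submodule.span k
        ({(b 0 ⊗ₜ[k] b 0, b 0 ⊗ₜ[k] (b 0 + b 1)),
          (b 1 ⊗ₜ[k] b 0, b 1 ⊗ₜ[k] b 0),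
          ((b 0 + b 1) ⊗ₜ[k] b 1, b 1 ⊗ₜ[k] b 1)} :
          Set ((Ω ⊗[k] Ω) × (Ω ⊗[k] Ω))) →
      ((∀ α β : Module.Dual k Ω, α star = 1 → β star = 1 →
          (IsCompatible α β ΛD ↔
            (α (b 0) = 1 ∧ α (b 1) = 0 ∧ β (b 0) = 0 ∧ β (b 1) = 1))) ∧
       (∀ α β : Module.Dual k Ω,
          α (b 0) = 1 → α (b 1) = 0 → β (b 0) = 0 → β (b 1) = 1 →
            IsCoherent α β star ΛD)) := by
  
  intro star hstar ΛD hΛ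
  subst hstar hΛ
  -- simple-tensor computations
  have hL : ∀ (φ : Module.Dual k Ω) (x y : Ω), contrL φ (x ⊗ₜ[k] y) = φ x • y := by
    intro φ x y; simp [contrL]
  have hR : ∀ (φ : Module.Dual k Ω) (x y : Ω), contrR φ (x ⊗ₜ[k] y) = φ y • x := by
    intro φ x y; simp [contrR]
  have hB : ∀ (φ ψ : Module.Dual k Ω) (x y : Ω),
      contrB φ ψ (x ⊗ₜ[k] y) = φ x * ψ y := by
    intro φ ψ x y; simp [contrB, smul_eq_mul]
  have hcoord : ∀ (c d : k), c • b 0 + d • b 1 = 0 → c = 0 ∧ d = 0 := by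
    intro c d h
    constructor
    · have := congrArg (b.coord 0) h
      simpa using this
    · have := congrArg (b.coord 1) h
      simpa using this
  -- the coherence part
  have key : ∀ α β : Module.Dual k Ω,
      α (b 0) = 1 → α (b 1) = 0 → β (b 0) = 0 → β (b 1) = 1 →
      IsCoherent α β (b 0 + b 1) (Submodule.span k
        ({(b 0 ⊗ₜ[k] b 0, b 0 ⊗ₜ[k] (b 0 + b 1)),
          (b 1 ⊗ₜ[k] b 0, b 1 ⊗ₜ[k] b 0),
          ((b 0 + b 1) ⊗ₜ[k] b 1, b 1 ⊗ₜ[k] b 1)} :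
          Set ((Ω ⊗[k] Ω) × (Ω ⊗[k] Ω)))) := by
    intro α β ha0 ha1 hb0 hb1 uv huv
    induction huv using Submodule.span_induction with
    | mem x hx =>
      rcases hx with hx | hx | hx <;> subst hx <;>
        refine ⟨?_, ?_, ?_, ?_, ?_⟩ <;>
        simp [tmul_add, add_tmul, map_add, hL, hR, hB, ha0, ha1, hb0, hb1,
          add_smul, smul_add]
    | zero =>
      refine ⟨?_, ?_, ?_, ?_, ?_⟩ <;> simp
    | add x y hx hy ihx ihy =>
      obtain ⟨e1, e2, e3, e4, e5⟩ := ihx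
      obtain ⟨f1, f2, f3, f4, f5⟩ := ihy
      refine ⟨?_, ?_, ?_, ?_, ?_⟩ <;>
        simp only [Prod.fst_add, Prod.snd_add, map_add, add_smul,
          e1, e2, e3, e4, e5, f1, f2, f3, f4, f5]
    | smul c x hx ih =>
      obtain ⟨e1, e2, e3, e4, e5⟩ := ih
      refine ⟨?_, ?_, ?_, ?_, ?_⟩ <;>
        simp only [Prod.smul_fst, Prod.smul_snd, map_smul, smul_assoc,
          e1, e2, e3, e4, e5]
  refine ⟨?_, key⟩
  intro α β hα hβ
  have hα' : α (b 0) + α (b 1) = 1 := by rw [← map_add]; exact hα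
  have hβ' : β (b 0) + β (b 1) = 1 := by rw [← map_add]; exact hβ
  constructor
  · intro hcomp
    have m1 : ((b 0 ⊗ₜ[k] b 0 : Ω ⊗[k] Ω), b 0 ⊗ₜ[k] (b 0 + b 1)) ∈
        Submodule.span k
        ({(b 0 ⊗ₜ[k] b 0, b 0 ⊗ₜ[k] (b 0 + b 1)),
          (b 1 ⊗ₜ[k] b 0, b 1 ⊗ₜ[k] b 0),
          ((b 0 + b 1) ⊗ₜ[k] b 1, b 1 ⊗ₜ[k] b 1)} :
          Set ((Ω ⊗[k] Ω) × (Ω ⊗[k] Ω))) := Submodule.subset_span (by simp)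
    have m3 : (((b 0 + b 1) ⊗ₜ[k] b 1 : Ω ⊗[k] Ω), b 1 ⊗ₜ[k] b 1) ∈
        Submodule.span k
        ({(b 0 ⊗ₜ[k] b 0, b 0 ⊗ₜ[k] (b 0 + b 1)),
          (b 1 ⊗ₜ[k] b 0, b 1 ⊗ₜ[k] b 0),
          ((b 0 + b 1) ⊗ₜ[k] b 1, b 1 ⊗ₜ[k] b 1)} :
          Set ((Ω ⊗[k] Ω) × (Ω ⊗[k] Ω))) := Submodule.subset_span (by simp)
    obtain ⟨c1, c2, c3⟩ := hcomp _ m1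
    obtain ⟨d1, d2, d3⟩ := hcomp _ m3
    -- c1 : β(b0) • b0 = β(b0) • (b0 + b1)  ⇒ β(b0) = 0
    rw [hL, hL] at c1
    have hβ0 : β (b 0) = 0 := by
      have h0 : (0 : k) • b 0 + β (b 0) • b 1 = 0 := by
        rw [zero_smul, zero_add]
        have := c1.symm
        rw [smul_add] at this
        have := congrArg (fun z => z - β (b 0) • b 0) this
        simpa using this
      exact (hcoord _ _ h0).2
    -- c2 : α(b0) • b0 = β(b0+b1) • b0 = b0 ⇒ α(b0) = 1
    rw [hL, hR] at c2
    have hα0 : α (b 0) = 1 := by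
      have h0 : (α (b 0) - 1) • b 0 + (0 : k) • b 1 = 0 := by
        rw [zero_smul, add_zero, sub_smul, one_smul, c2, hβ, one_smul, sub_self]
      have := (hcoord _ _ h0).1
      have := sub_eq_zero.mp this
      linear_combination this
    -- d3 : α(b1) • (b0 + b1) = α(b1) • b1 ⇒ α(b1) = 0
    rw [hR, hR] at d3
    have hα1 : α (b 1) = 0 := by
      have h0 : α (b 1) • b 0 + (0 : k) • b 1 = 0 := by
        rw [zero_smul, add_zero]
        rw [smul_add] at d3
        have := congrArg (fun z => z - α (b 1) • b 1) d3
        simpa using this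
      exact (hcoord _ _ h0).1
    have hβ1 : β (b 1) = 1 := by rw [hβ0, zero_add] at hβ'; exact hβ' 
    exact ⟨hα0, hα1, hβ0, hβ1⟩
  · rintro ⟨h1, h2, h3, h4⟩
    intro uv huv
    obtain ⟨e1, e2, e3, _, _⟩ := key α β h1 h2 h3 h4 uv huv
    exact ⟨e1, e2, e3⟩
end

section
/- Let k be a field of characteristic zero, let Ω be the 2-dimensional k-vector space with basis {⊣, ⊢}, and let Λ_AD ⊆ (Ω⊗Ω) ⊕ (Ω⊗Ω) be the associative dialgebra relation space, namely the span of (⊣⊗⊣, ⊣⊗⊣), (⊢⊗⊢, ⊢⊗⊢), (⊣⊗⊣, ⊣⊗⊢), (⊢⊗⊣, ⊢⊗⊣), and (⊣⊗⊢, ⊢⊗⊢). Then there is no triple (⋆, α, β) with ⋆ ∈ Ω satisfying (⋆⊗⋆, ⋆⊗⋆) ∈ Λ_AD and α, β : Ω → k linear with α(⋆) = β(⋆) = 1 such that (α, β) is coherent with Λ_AD. -/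
open TensorProduct

/-- The associative dialgebra admits no coherent unit action for any choice of
associative operation. -/
theorem associative_dialgebra_no_coherent
    {k : Type*} [Field k] [CharZero k]
    {Ω : Type*} [AddCommGroup Ω] [Module k Ω]
    (b : Module.Basis (Fin 2) k Ω)
    (ΛAD : Submodule k ((Ω ⊗[k] Ω) × (Ω ⊗[k] Ω)))
    (hΛ : ΛAD = Submodule.span k
      ({(b 0 ⊗ₜ[k] b 0, b 0 ⊗ₜ[k] b 0),
        (b 1 ⊗ₜ[k] b 1, b 1 ⊗ₜ[k] b 1),
        (b 0 ⊗ₜ[k] b 0, b 0 ⊗ₜ[k] b 1),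
        (b 1 ⊗ₜ[k] b 0, b 1 ⊗ₜ[k] b 0),
        (b 0 ⊗ₜ[k] b 1, b 1 ⊗ₜ[k] b 1)} :
        Set ((Ω ⊗[k] Ω) × (Ω ⊗[k] Ω)))) :
    ¬ ∃ (star : Ω) (α β : Module.Dual k Ω),
        (star ⊗ₜ[k] star, star ⊗ₜ[k] star) ∈ ΛAD ∧
        α star = 1 ∧ β star = 1 ∧ IsCoherent α β star ΛAD := by
  rintro ⟨star, α, β, hstar, hα, hβ, hcoh⟩
  subst hΛ
  have h1 := hcoh _ (Submodule.subset_span (by left; rfl))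
  have h3 := hcoh (b 0 ⊗ₜ[k] b 0, b 0 ⊗ₜ[k] b 1)
    (Submodule.subset_span (by right; right; left; rfl))
  have h5 := hcoh (b 0 ⊗ₜ[k] b 1, b 1 ⊗ₜ[k] b 1)
    (Submodule.subset_span (by right; right; right; right; rfl))
  simp only [CoherenceEqs, contrL, contrR, contrB, LinearMap.comp_apply,
    TensorProduct.map_tmul, TensorProduct.lid_tmul, TensorProduct.rid_tmul,
    LinearMap.id_apply, LinearEquiv.coe_coe, smul_eq_mul] at h1 h3 h5
  have hα0 : α (b 0) = 0 := by
    have h := h1.2.2.2.2.symm.trans h3.2.2.2.2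
    have := congrArg (fun x => b.repr x 0) h
    simpa using this
  have hα1 : α (b 1) = 0 := by
    have h := h5.2.2.1
    have := congrArg (fun x => b.repr x 0) h
    simpa using this
  have hzero : α = 0 := b.ext fun i => by fin_cases i <;> simp [hα0, hα1]
  rw [hzero] at hα
  simp at hα
end
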